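/- arXiv:2311.03266 — 2 statements merged into one kernel-verified Lean document; each statement's English description precedes it below -/
import Mathlib

section
/- For any four unit vectors ψ1, ψ2, ψ3, ψ4 in the 2-dimensional complex Hilbert space ℂ², with overlaps r_{ij} = |⟨ψi|ψj⟩|², the inequality r_{12} + r_{13} + r_{14} − r_{23} − r_{24} − r_{34} ≤ 1 holds. -/
/-!
Send `ψ = (a, b) ∈ ℂ²` to its Bloch vector `n(ψ) = (2 Re(ā b), 2 Im(ā b), |a|² − |b|²) ∈ ℝ³`. Then
`2 |⟨ψ, φ⟩|² = ‖ψ‖² ‖φ‖² + n(ψ) · n(φ)` and `‖n(ψ)‖ = ‖ψ‖²`, so unit vectors of `ℂ²` go to the unit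
sphere and the claim becomes `n₀·n₁ + n₀·n₂ + n₀·n₃ − n₁·n₂ − n₁·n₃ − n₂·n₃ ≤ 2` for unit vectors
of `ℝ³`, which is `‖n₀ − n₁ − n₂ − n₃‖² ≥ 0` expanded.
-/

open ComplexConjugate

noncomputable def blochVector (ψ : EuclideanSpace ℂ (Fin 2)) : EuclideanSpace ℝ (Fin 3) :=
  !₂[2 * (conj (ψ 0) * ψ 1).re, 2 * (conj (ψ 0) * ψ 1).im,
    Complex.normSq (ψ 0) - Complex.normSq (ψ 1)]

theorem sq_norm_inner_eq_blochVector (ψ φ : EuclideanSpace ℂ (Fin 2)) :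
    ‖(inner ℂ ψ φ : ℂ)‖ ^ 2 =
      (‖ψ‖ ^ 2 * ‖φ‖ ^ 2 + inner ℝ (blochVector ψ) (blochVector φ)) / 2 := by
  simp only [blochVector, EuclideanSpace.norm_sq_eq, PiLp.inner_apply, Fin.sum_univ_two,
    Fin.sum_univ_three, Complex.sq_norm, RCLike.inner_apply, Complex.normSq_apply, Fin.isValue,
    Complex.add_re, Complex.mul_re, Complex.conj_re, Complex.conj_im, Complex.add_im,
    Complex.mul_im, Matrix.cons_val_zero, Matrix.cons_val_one, Matrix.cons_val,
    Real.ringHom_apply]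
  ring

theorem norm_blochVector (ψ : EuclideanSpace ℂ (Fin 2)) : ‖blochVector ψ‖ = ‖ψ‖ ^ 2 := by
  have h := sq_norm_inner_eq_blochVector ψ ψ
  rw [inner_self_eq_norm_sq_to_K, norm_pow, RCLike.norm_ofReal, abs_norm,
    real_inner_self_eq_norm_sq] at h
  have h_sq : ‖blochVector ψ‖ ^ 2 = (‖ψ‖ ^ 2) ^ 2 := by linarith
  exact (pow_left_inj₀ (norm_nonneg _) (by positivity) two_ne_zero).mp h_sq

theorem two_mul_signed_inner_sum_le {F : Type*} [NormedAddCommGroup F] [InnerProductSpace ℝ F]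
    (x₀ x₁ x₂ x₃ : F) :
    2 * (inner ℝ x₀ x₁ + inner ℝ x₀ x₂ + inner ℝ x₀ x₃
        - inner ℝ x₁ x₂ - inner ℝ x₁ x₃ - inner ℝ x₂ x₃) ≤
      ‖x₀‖ ^ 2 + ‖x₁‖ ^ 2 + ‖x₂‖ ^ 2 + ‖x₃‖ ^ 2 := by
  have h := sq_nonneg ‖x₀ - x₁ - x₂ - x₃‖
  simp only [← real_inner_self_eq_norm_sq, inner_sub_left, inner_sub_right,
    real_inner_comm] at h ⊢
  linarith

/-- For any four unit vectors in ℂ², the overlaps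
`r i j = |⟨ψ i, ψ j⟩|²` satisfy
`r 0 1 + r 0 2 + r 0 3 − r 1 2 − r 1 3 − r 2 3 ≤ 1`. -/
theorem stmt_0 (ψ : Fin 4 → EuclideanSpace ℂ (Fin 2))
    (hψ : ∀ i, ‖ψ i‖ = 1)
    (r : Fin 4 → Fin 4 → ℝ)
    (hr : ∀ i j, r i j = ‖(inner ℂ (ψ i) (ψ j) : ℂ)‖ ^ 2) :
    r 0 1 + r 0 2 + r 0 3 - r 1 2 - r 1 3 - r 2 3 ≤ 1 := by
  have h := two_mul_signed_inner_sum_le (blochVector (ψ 0)) (blochVector (ψ 1))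
    (blochVector (ψ 2)) (blochVector (ψ 3))
  simp only [hr, sq_norm_inner_eq_blochVector, norm_blochVector, hψ] at h ⊢
  linarith
end

section
/- For any three unit vectors ψ1, ψ2, ψ3 in a complex Hilbert space with overlaps r_{ij} = |⟨ψi|ψj⟩|², the inequality r_{12} + r_{13} − r_{23} ≤ 5/4 holds, and the bound 5/4 is attained by three suitable qubit states. -/
/-!
Write `a = |⟨ψ₁,ψ₂⟩|`, `b = |⟨ψ₁,ψ₃⟩|`, `c = |⟨ψ₂,ψ₃⟩|`. Removing from `ψ₂` and `ψ₃` their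
components along `ψ₁` and applying Cauchy–Schwarz to what is left gives
`(ab - c)² ≤ (1 - a²)(1 - b²)`, i.e. `1 - a² - b² - c² + 2abc ≥ 0`. Then
`(1 - c)(5/4 - a² - b² + c²) = (1 - a² - b² - c² + 2abc) + c(a - b)² + (1 - c)(c - 1/2)²`
is nonnegative, which gives the bound when `c < 1`; when `c = 1` it forces `a = b`.
-/

open scoped ComplexConjugate InnerProductSpace

section

variable {𝕜 E : Type*} [RCLike 𝕜] [NormedAddCommGroup E] [InnerProductSpace 𝕜 E]

theorem norm_sub_inner_smul_sq {u : E} (hu : ‖u‖ = 1) (v : E) :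
    ‖v - ⟪u, v⟫_𝕜 • u‖ ^ 2 = ‖v‖ ^ 2 - ‖⟪u, v⟫_𝕜‖ ^ 2 := by
  rw [@norm_sub_sq 𝕜, inner_smul_right, ← inner_conj_symm v u, RCLike.mul_conj, norm_smul, hu,
    ← RCLike.ofReal_pow, RCLike.ofReal_re]
  ring

theorem inner_sub_inner_smul_sub_inner_smul {u : E} (hu : ‖u‖ = 1) (v w : E) :
    ⟪v - ⟪u, v⟫_𝕜 • u, w - ⟪u, w⟫_𝕜 • u⟫_𝕜 = ⟪v, w⟫_𝕜 - conj ⟪u, v⟫_𝕜 * ⟪u, w⟫_𝕜 := by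
  have huu : ⟪u, u⟫_𝕜 = 1 := by rw [inner_self_eq_norm_sq_to_K, hu]; simp
  simp only [inner_sub_left, inner_sub_right, inner_smul_left, inner_smul_right, huu,
    inner_conj_symm]
  ring

theorem norm_inner_mul_norm_inner_sub_norm_inner_sq_le {u : E} (hu : ‖u‖ = 1) (v w : E) :
    (‖⟪u, v⟫_𝕜‖ * ‖⟪u, w⟫_𝕜‖ - ‖⟪v, w⟫_𝕜‖) ^ 2
      ≤ (‖v‖ ^ 2 - ‖⟪u, v⟫_𝕜‖ ^ 2) * (‖w‖ ^ 2 - ‖⟪u, w⟫_𝕜‖ ^ 2) := by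
  rw [← norm_sub_inner_smul_sq hu, ← norm_sub_inner_smul_sq hu, ← mul_pow, ← sq_abs]
  gcongr
  calc |‖⟪u, v⟫_𝕜‖ * ‖⟪u, w⟫_𝕜‖ - ‖⟪v, w⟫_𝕜‖|
      = |‖⟪v, w⟫_𝕜‖ - ‖conj ⟪u, v⟫_𝕜 * ⟪u, w⟫_𝕜‖| := by
        rw [norm_mul, RCLike.norm_conj, abs_sub_comm]
    _ ≤ ‖⟪v, w⟫_𝕜 - conj ⟪u, v⟫_𝕜 * ⟪u, w⟫_𝕜‖ := abs_norm_sub_norm_le _ _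
    _ = ‖⟪v - ⟪u, v⟫_𝕜 • u, w - ⟪u, w⟫_𝕜 • u⟫_𝕜‖ := by
        rw [inner_sub_inner_smul_sub_inner_smul hu]
    _ ≤ ‖v - ⟪u, v⟫_𝕜 • u‖ * ‖w - ⟪u, w⟫_𝕜 • u‖ := norm_inner_le_norm _ _

end

theorem sq_add_sq_sub_sq_le_five_div_four {a b c : ℝ} (ha : |a| ≤ 1) (hc₀ : 0 ≤ c) (hc₁ : c ≤ 1)
    (h : (a * b - c) ^ 2 ≤ (1 - a ^ 2) * (1 - b ^ 2)) :
    a ^ 2 + b ^ 2 - c ^ 2 ≤ 5 / 4 := by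
  have hgram : 0 ≤ 1 - a ^ 2 - b ^ 2 - c ^ 2 + 2 * a * b * c := by linarith
  rcases hc₁.lt_or_eq with hc₁ | rfl
  · have hslack : 0 ≤ (1 - c) * (5 / 4 - a ^ 2 - b ^ 2 + c ^ 2) := by
      rw [show (1 - c) * (5 / 4 - a ^ 2 - b ^ 2 + c ^ 2)
          = (1 - a ^ 2 - b ^ 2 - c ^ 2 + 2 * a * b * c) + c * (a - b) ^ 2
            + (1 - c) * (c - 1 / 2) ^ 2 by ring]
      have := mul_nonneg hc₀ (sq_nonneg (a - b))
      have := mul_nonneg (sub_nonneg.2 hc₁.le) (sq_nonneg (c - 1 / 2))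
      linarith
    linarith [nonneg_of_mul_nonneg_right hslack (sub_pos.2 hc₁)]
  · have hab : a = b := by nlinarith
    nlinarith [sq_le_one_iff_abs_le_one a |>.mpr ha]

noncomputable def qubitTriple : Fin 3 → EuclideanSpace ℂ (Fin 2) :=
  ![!₂[1, 0], !₂[(√3 / 2 : ℝ), 1 / 2], !₂[(√3 / 2 : ℝ), -1 / 2]]

theorem norm_qubitTriple (i : Fin 3) : ‖qubitTriple i‖ = 1 := by
  rw [EuclideanSpace.norm_eq, Real.sqrt_eq_one]
  fin_cases i <;> norm_num [qubitTriple, div_pow]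

theorem qubitTriple_overlaps :
    ‖⟪qubitTriple 0, qubitTriple 1⟫_ℂ‖ ^ 2 + ‖⟪qubitTriple 0, qubitTriple 2⟫_ℂ‖ ^ 2
      - ‖⟪qubitTriple 1, qubitTriple 2⟫_ℂ‖ ^ 2 = 5 / 4 := by
  have h01 : ⟪qubitTriple 0, qubitTriple 1⟫_ℂ = (√3 / 2 : ℝ) := by
    simp [qubitTriple, PiLp.inner_apply, Fin.sum_univ_two]
  have h02 : ⟪qubitTriple 0, qubitTriple 2⟫_ℂ = (√3 / 2 : ℝ) := by
    simp [qubitTriple, PiLp.inner_apply, Fin.sum_univ_two]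
  have h12 : ⟪qubitTriple 1, qubitTriple 2⟫_ℂ = (1 / 2 : ℝ) := by
    simp [qubitTriple, PiLp.inner_apply, Fin.sum_univ_two, map_ofNat]
    ring_nf
    rw [← Complex.ofReal_pow, Real.sq_sqrt zero_le_three]
    norm_num
  rw [h01, h02, h12, Complex.norm_real, Complex.norm_real, Real.norm_eq_abs, Real.norm_eq_abs]
  norm_num [div_pow]

/-- For any three unit vectors in ℂ^d with overlaps `r i j = |⟨ψi,ψj⟩|²`,
`r 0 1 + r 0 2 − r 1 2 ≤ 5/4`, and the bound is attained by suitable qubit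
states. -/
theorem stmt_18 {d : ℕ}
    (ψ : Fin 3 → EuclideanSpace ℂ (Fin d))
    (hψ : ∀ i, ‖ψ i‖ = 1)
    (r : Fin 3 → Fin 3 → ℝ)
    (hr : ∀ i j, r i j = ‖(inner ℂ (ψ i) (ψ j) : ℂ)‖ ^ 2) :
    r 0 1 + r 0 2 - r 1 2 ≤ 5/4 ∧
    ∃ φ : Fin 3 → EuclideanSpace ℂ (Fin 2), (∀ i, ‖φ i‖ = 1) ∧
      ‖(inner ℂ (φ 0) (φ 1) : ℂ)‖ ^ 2 + ‖(inner ℂ (φ 0) (φ 2) : ℂ)‖ ^ 2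
        - ‖(inner ℂ (φ 1) (φ 2) : ℂ)‖ ^ 2 = 5/4 := by
  refine ⟨?_, qubitTriple, norm_qubitTriple, qubitTriple_overlaps⟩
  have hgram := norm_inner_mul_norm_inner_sub_norm_inner_sq_le (𝕜 := ℂ) (hψ 0) (ψ 1) (ψ 2)
  rw [hψ 1, hψ 2, one_pow] at hgram
  have h01 : |‖⟪ψ 0, ψ 1⟫_ℂ‖| ≤ 1 := by
    simpa [hψ] using norm_inner_le_norm (𝕜 := ℂ) (ψ 0) (ψ 1)
  have h12 : ‖⟪ψ 1, ψ 2⟫_ℂ‖ ≤ 1 := by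
    simpa [hψ] using norm_inner_le_norm (𝕜 := ℂ) (ψ 1) (ψ 2)
  rw [hr, hr, hr]
  exact sq_add_sq_sub_sq_le_five_div_four h01 (norm_nonneg _) h12 hgram
end
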